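/- arXiv:2011.11116 — 4 statements merged into one kernel-verified Lean document; each statement's English description precedes it below -/
import Mathlib

section
/- Let K be a field with char(K) ≠ 2 and consider UJ2 with the associative grading: E0 = span{e11+e22, e12}, E1 = span{e11−e22}. Then for all Y1, Y2, Y3 ∈ E0 and all Z1, Z2, Z3, Z4 ∈ E1 the following hold, where (u,v,w) = (u∘v)∘w − u∘(v∘w): (Y1,Y2,Y3) = 0, (Z1,Y1,Y2) = 0, (Z1,Y1,Z2) = 0, (Z1,Z2,Z3) = 0, and (Z1∘Z2, Z3, Z4) = 0. -/
open Matrix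


noncomputable section

/-- The 2×2 matrices over `K`. -/
abbrev Mat (K : Type*) [Field K] : Type _ := Matrix (Fin 2) (Fin 2) K

/-- The Jordan product `u∘v = (1/2)(u·v + v·u)`. -/
def jp {K : Type*} [Field K] (u v : Mat K) : Mat K := (1/2 : K) • (u * v + v * u)

/-- The Jordan associator `(u,v,w) = (u∘v)∘w − u∘(v∘w)`. -/
def assoc {K : Type*} [Field K] (u v w : Mat K) : Mat K := jp (jp u v) w - jp u (jp v w)

def oneM (K : Type*) [Field K] : Mat K := !![1, 0; 0, 1]
def aM (K : Type*) [Field K] : Mat K := !![1, 0; 0, -1]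
def bM (K : Type*) [Field K] : Mat K := !![0, 1; 0, 0]

/-- Even component of the associative grading: `span{e11+e22, e12}`. -/
def E0 (K : Type*) [Field K] : Submodule K (Mat K) :=
  Submodule.span K {oneM K, bM K}

/-- Odd component of the associative grading: `span{e11−e22}`. -/
def E1 (K : Type*) [Field K] : Submodule K (Mat K) :=
  Submodule.span K {aM K}

set_option maxHeartbeats 4000000
/-- the graded identities of Lemma 4 (`lemaGA`) hold in `UJ₂` with the
associative grading. -/

theorem stmt_5 (K : Type*) [Field K] (hK : ringChar K ≠ 2)
    (Y1 Y2 Y3 : Mat K) (hY1 : Y1 ∈ E0 K) (hY2 : Y2 ∈ E0 K) (hY3 : Y3 ∈ E0 K)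
    (Z1 Z2 Z3 Z4 : Mat K) (hZ1 : Z1 ∈ E1 K) (hZ2 : Z2 ∈ E1 K) (hZ3 : Z3 ∈ E1 K)
    (hZ4 : Z4 ∈ E1 K) :
    assoc Y1 Y2 Y3 = 0 ∧ assoc Z1 Y1 Y2 = 0 ∧ assoc Z1 Y1 Z2 = 0 ∧
    assoc Z1 Z2 Z3 = 0 ∧ assoc (jp Z1 Z2) Z3 Z4 = 0 := by
  rw [E0, Submodule.mem_span_pair] at hY1 hY2 hY3
  rw [E1, Submodule.mem_span_singleton] at hZ1 hZ2 hZ3 hZ4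
  obtain ⟨c1, d1, rfl⟩ := hY1
  obtain ⟨c2, d2, rfl⟩ := hY2
  obtain ⟨c3, d3, rfl⟩ := hY3
  obtain ⟨z1, rfl⟩ := hZ1
  obtain ⟨z2, rfl⟩ := hZ2
  obtain ⟨z3, rfl⟩ := hZ3
  obtain ⟨z4, rfl⟩ := hZ4
  refine ⟨?_, ?_, ?_, ?_, ?_⟩ <;>
  · ext i j
    fin_cases i <;> fin_cases j <;>
      simp [assoc, jp, oneM, aM, bM, Matrix.mul_apply, Fin.sum_univ_two,
        Matrix.smul_apply, Matrix.add_apply, Matrix.sub_apply] <;> ring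
end
end

section
/- Let K be a field with char(K) ≠ 2 and consider UJ2 with the associative grading: E0 = span{e11+e22, e12}, E1 = span{e11−e22}. Then for all Y1, Y2 ∈ E0 and all Z1, Z2 ∈ E1 one has ((Y1∘Y2)∘Z1)∘Z2 − ((Y1∘Z1)∘Z2)∘Y2 − ((Y2∘Z1)∘Z2)∘Y1 + (Z1∘Z2)∘(Y1∘Y2) = 0. -/
open Matrix

noncomputable section

lemma jp_tri {K : Type*} [Field K] (h2 : (2:K) ≠ 0) (a b c d e f : K) :
    jp !![a, b; 0, c] !![d, e; 0, f] =
      !![a*d, (1/2)*(a*e + b*f + d*b + e*c); 0, c*f] := by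
  unfold jp
  ext i j
  fin_cases i <;> fin_cases j
  all_goals (try simp [Matrix.mul_apply, Fin.sum_univ_two])
  all_goals (try field_simp)
  all_goals (first | rfl | exact Or.inl (by ring) | ring)

lemma E0_form {K : Type*} [Field K] {Y : Mat K} (h : Y ∈ E0 K) :
    ∃ a b : K, Y = !![a, b; 0, a] := by
  rw [E0, Submodule.mem_span_pair] at h
  obtain ⟨a, b, rfl⟩ := h
  refine ⟨a, b, ?_⟩
  ext i j
  fin_cases i <;> fin_cases j <;> simp [oneM, bM]

lemma E1_form {K : Type*} [Field K] {Z : Mat K} (h : Z ∈ E1 K) :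
    ∃ c : K, Z = !![c, 0; 0, -c] := by
  rw [E1, Submodule.mem_span_singleton] at h
  obtain ⟨c, rfl⟩ := h
  refine ⟨c, ?_⟩
  ext i j
  fin_cases i <;> fin_cases j <;> simp [aM]

/-- in `UJ₂` with the associative grading, for even `Y1, Y2` and odd
`Z1, Z2` one has
`((Y1∘Y2)∘Z1)∘Z2 − ((Y1∘Z1)∘Z2)∘Y2 − ((Y2∘Z1)∘Z2)∘Y1 + (Z1∘Z2)∘(Y1∘Y2) = 0`. -/
theorem stmt_6 (K : Type*) [Field K] (hK : ringChar K ≠ 2)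
    (Y1 Y2 : Mat K) (hY1 : Y1 ∈ E0 K) (hY2 : Y2 ∈ E0 K)
    (Z1 Z2 : Mat K) (hZ1 : Z1 ∈ E1 K) (hZ2 : Z2 ∈ E1 K) :
    jp (jp (jp Y1 Y2) Z1) Z2 - jp (jp (jp Y1 Z1) Z2) Y2 - jp (jp (jp Y2 Z1) Z2) Y1
      + jp (jp Z1 Z2) (jp Y1 Y2) = 0 := by
  obtain ⟨a1, b1, rfl⟩ := E0_form hY1
  obtain ⟨a2, b2, rfl⟩ := E0_form hY2
  obtain ⟨c1, rfl⟩ := E1_form hZ1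
  obtain ⟨c2, rfl⟩ := E1_form hZ2
  have h2 : (2:K) ≠ 0 := Ring.two_ne_zero hK
  simp only [jp_tri h2]
  ext i j
  fin_cases i <;> fin_cases j
  all_goals (try simp)
  all_goals (try field_simp)
  all_goals (first | rfl | tauto | ring)
end
end

section
/- Let K be a finite field with exactly q elements and char(K) ≠ 2, and consider UJ2 with the associative grading: E0 = span{e11+e22, e12}, E1 = span{e11−e22}. Then for all Y1, Y2 ∈ E0 and all Z ∈ E1 the following hold: (Y1^q − Y1)∘(Y2^q − Y2) = 0, Z^q = Z, and (Y1^q − Y1)∘Z = 0, where powers denote matrix powers. -/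
open Matrix

noncomputable section

section Aux
variable {K : Type*} [Field K]

lemma bM_mul_bM : bM K * bM K = 0 := by
  ext i j; fin_cases i <;> fin_cases j <;> simp [bM, Matrix.mul_apply, Fin.sum_univ_two]

lemma bM_mul_aM_add : bM K * aM K + aM K * bM K = 0 := by
  ext i j; fin_cases i <;> fin_cases j <;>
    simp [bM, aM, Matrix.mul_apply, Fin.sum_univ_two]

lemma aM_sq : aM K * aM K = 1 := by
  ext i j; fin_cases i <;> fin_cases j <;>
    simp [aM, Matrix.mul_apply, Fin.sum_univ_two, Matrix.one_apply]

lemma oneM_eq : oneM K = 1 := by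
  ext i j; fin_cases i <;> fin_cases j <;> simp [oneM, Matrix.one_apply]

lemma pow_E0 (α β : K) (n : ℕ) :
    ∃ c : K, (α • (1 : Mat K) + β • bM K) ^ n = α ^ n • (1 : Mat K) + c • bM K := by
  induction n with
  | zero => exact ⟨0, by simp⟩
  | succ n ih =>
    obtain ⟨c, hc⟩ := ih
    refine ⟨α ^ n * β + c * α, ?_⟩
    rw [pow_succ, hc]
    simp only [add_mul, mul_add, Matrix.smul_mul, Matrix.mul_smul, one_mul, mul_one,
      bM_mul_bM, smul_smul, smul_zero, pow_succ]
    abel_nf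
    rw [add_smul]
    module

lemma jp_bM_bM (x y : K) : jp (x • bM K) (y • bM K) = 0 := by
  simp [jp, Matrix.smul_mul, Matrix.mul_smul, bM_mul_bM]

lemma jp_bM_aM (x y : K) : jp (x • bM K) (y • aM K) = 0 := by
  simp only [jp, Matrix.smul_mul, Matrix.mul_smul, smul_smul, mul_comm y x, ← smul_add,
    bM_mul_aM_add]
  simp

lemma E0_sub (Y : Mat K) [Fintype K] (q : ℕ) (hq : Fintype.card K = q)
    (hY : Y ∈ E0 K) : ∃ c : K, Y ^ q - Y = c • bM K := by
  rw [E0, Submodule.mem_span_pair] at hY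
  obtain ⟨α, β, rfl⟩ := hY
  rw [oneM_eq]
  obtain ⟨c, hc⟩ := pow_E0 α β q
  refine ⟨c - β, ?_⟩
  rw [hc, ← hq, FiniteField.pow_card]
  rw [sub_smul]
  abel

end Aux

/-- over a finite field with `q` elements, `char K ≠ 2`, in `UJ₂` with the
associative grading: `(Y1^q − Y1)∘(Y2^q − Y2) = 0`, `Z^q = Z`, `(Y1^q − Y1)∘Z = 0`. -/
theorem stmt_7 (K : Type*) [Field K] [Fintype K] (q : ℕ) (hq : Fintype.card K = q)
    (hK : ringChar K ≠ 2)
    (Y1 Y2 : Mat K) (hY1 : Y1 ∈ E0 K) (hY2 : Y2 ∈ E0 K)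
    (Z : Mat K) (hZ : Z ∈ E1 K) :
    jp (Y1 ^ q - Y1) (Y2 ^ q - Y2) = 0 ∧ Z ^ q = Z ∧ jp (Y1 ^ q - Y1) Z = 0 := by
  obtain ⟨c1, h1⟩ := E0_sub Y1 q hq hY1
  obtain ⟨c2, h2⟩ := E0_sub Y2 q hq hY2
  rw [E1, Submodule.mem_span_singleton] at hZ
  obtain ⟨γ, rfl⟩ := hZ
  refine ⟨by rw [h1, h2]; exact jp_bM_bM c1 c2, ?_, by rw [h1]; exact jp_bM_aM c1 γ⟩
  have hodd : Odd q := by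
    rw [← hq, Nat.odd_iff]; exact FiniteField.odd_card_of_char_ne_two hK
  obtain ⟨m, rfl⟩ := hodd
  have : (aM K) ^ (2 * m + 1) = aM K := by
    rw [pow_succ, pow_mul, pow_two, aM_sq, one_pow, one_mul]
  rw [smul_pow, this, ← hq, FiniteField.pow_card]
end
end

section
/- Let K be a finite field with exactly q elements and char(K) ≠ 2, and consider UJ2 with the associative grading: E0 = span{e11+e22, e12}, E1 = span{e11−e22}. Then for every Y ∈ E0 and all homogeneous elements X1, X2 ∈ E0 ∪ E1, the Jordan associator (Y^q, X1, X2) = (Y^q∘X1)∘X2 − Y^q∘(X1∘X2) vanishes, where Y^q denotes the q-th matrix power of Y. -/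
open Matrix

noncomputable section

/-- Binomial formula for `(c•1 + N)^(n+1)` when `N` is square-zero. -/
lemma pow_formula {K : Type*} [Field K] (c : K) (N : Mat K) (hN : N * N = 0) :
    ∀ n : ℕ, (c • 1 + N) ^ (n+1) = c^(n+1) • 1 + (((n+1 : ℕ) : K) * c^n) • N := by
  intro n
  induction n with
  | zero => simp
  | succ n ih =>
    rw [pow_succ, ih]
    simp only [add_mul, mul_add, Matrix.smul_mul, Matrix.mul_smul, hN, smul_zero,
      one_mul, mul_one, smul_smul]
    push_cast
    match_scalars <;> ring

/-- Scalar matrices have vanishing Jordan associator. -/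
lemma central {K : Type*} [Field K] (h2 : (2:K) ≠ 0) (s : K) (v w : Mat K) :
    assoc (s • (1 : Mat K)) v w = 0 := by
  have key : ∀ u : Mat K, jp (s • 1) u = s • u := by
    intro u
    simp only [jp, Matrix.smul_mul, Matrix.mul_smul, one_mul, mul_one, smul_smul]
    match_scalars
    field_simp
    ring
  have key2 : ∀ u u' : Mat K, jp (s • u) u' = s • jp u u' := by
    intro u u'
    simp only [jp, Matrix.smul_mul, Matrix.mul_smul, smul_add, smul_smul]
    match_scalars <;> ring
  rw [assoc, key, key, key2, sub_self]

/-- over a finite field with `q` elements, `char K ≠ 2`, in `UJ₂` with the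
associative grading, for even `Y` and homogeneous `X1, X2` the Jordan associator
`(Y^q, X1, X2)` vanishes. -/
theorem stmt_8 (K : Type*) [Field K] [Fintype K] (q : ℕ) (hq : Fintype.card K = q)
    (hK : ringChar K ≠ 2)
    (Y X1 X2 : Mat K) (hY : Y ∈ E0 K)
    (hX1 : X1 ∈ (E0 K : Set (Mat K)) ∪ (E1 K : Set (Mat K)))
    (hX2 : X2 ∈ (E0 K : Set (Mat K)) ∪ (E1 K : Set (Mat K))) :
    assoc (Y ^ q) X1 X2 = 0 := by
  have h2 : (2:K) ≠ 0 := Ring.two_ne_zero hK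
  obtain ⟨c, d, hcd⟩ := Submodule.mem_span_pair.mp hY
  have hone : oneM K = (1 : Mat K) := by
    rw [oneM, Matrix.one_fin_two]
  have hbb : (d • bM K) * (d • bM K) = 0 := by
    have : bM K * bM K = 0 := by
      ext i j
      fin_cases i <;> fin_cases j <;>
        simp [bM, Matrix.mul_apply, Fin.sum_univ_two]
    rw [Matrix.smul_mul, Matrix.mul_smul, this, smul_zero, smul_zero]
  have hY' : Y = c • (1 : Mat K) + d • bM K := by
    rw [← hcd, hone]
  obtain ⟨m, rfl⟩ : ∃ m, q = m + 1 := by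
    refine ⟨q - 1, ?_⟩
    have : 0 < q := hq ▸ Fintype.card_pos
    omega
  have hqK : ((m + 1 : ℕ) : K) = 0 := by
    rw [← hq]
    exact FiniteField.cast_card_eq_zero K
  have : Y ^ (m + 1) = (c ^ (m+1)) • (1 : Mat K) := by
    rw [hY', pow_formula c (d • bM K) hbb m, hqK, zero_mul, zero_smul, add_zero]
  rw [this]
  exact central h2 _ X1 X2
end
end
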